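/- The h₂ decomposition: ϑ(z+1/2;τ)⁴ = h_{2,0}(τ) ϑ_{2,0}(z;τ) + h_{2,1}(τ)(ϑ_{2,1}(z;τ) + ϑ_{2,3}(z;τ)) + h_{2,2}(τ) ϑ_{2,2}(z;τ), where h_{2,0} = θ_{1,1}² θ_{2,0} + θ_{1,0}² θ_{2,2}, h_{2,1} = 2 θ_{1,0} θ_{1,1} θ_{2,1}, and h_{2,2} = θ_{1,1}² θ_{2,2} + θ_{1,0}² θ_{2,0}. -/

import Mathlib

open Complex

/-- The q-Pochhammer symbol `(a;q)_∞ = ∏_{n ≥ 1} (1 - a q^{n-1})`. -/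
noncomputable def qPoch (a q : ℂ) : ℂ := ∏' n : ℕ, (1 - a * q ^ n)

/-- The Jacobi theta function `ϑ(z;τ) = ∑_{n ∈ 1/2 + ℤ} e^{πi n² τ + 2πi n (z + 1/2)}`. -/
noncomputable def jTheta (z τ : ℂ) : ℂ :=
  ∑' n : ℤ, Complex.exp ((Real.pi : ℂ) * I * ((n : ℂ) + 1/2) ^ 2 * τ +
    2 * (Real.pi : ℂ) * I * ((n : ℂ) + 1/2) * (z + 1/2))

/-- `ϑ_{m,a}(z;τ) = ∑_{n ∈ ℤ} q^{(2mn+a)²/(4m)} ζ^{2mn+a}` with `q = e^{2πiτ}`, `ζ = e^{2πiz}`,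
fractional powers interpreted via `q^x = e^{2πiτx}`, `ζ^x = e^{2πizx}`. -/
noncomputable def thetaMA (m a : ℝ) (z τ : ℂ) : ℂ :=
  ∑' n : ℤ, Complex.exp (2 * (Real.pi : ℂ) * I * τ * ((2 * m * n + a) ^ 2 / (4 * m)) +
    2 * (Real.pi : ℂ) * I * z * (2 * m * n + a))

/-- The theta constant `θ_{m,a}(τ) = ϑ_{m,a}(0;τ)`. -/
noncomputable def thetaC (m a : ℝ) (τ : ℂ) : ℂ := thetaMA m a 0 τ

/-
Up to sign, `ϑ(z + 1/2)` is `ϑ_{1/2,1/2}(z)`. For `m > 0`, writing `u = 2mj + a`, `v = 2mk + b`, the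
identity `u² + v² = ((u - v)² + (u + v)²) / 2` together with the substitution `j - k = 2p + ε`,
`j + k = 2r + ε` (`ε ∈ {0, 1}`) gives the product formula
`ϑ_{m,a} ϑ_{m,b} = Σ_ε θ_{2m, a-b+2mε} ϑ_{2m, a+b+2mε}`.
Applied once at `m = 1/2` and three times at `m = 1`, and combined with `ϑ_{m,a+2m} = ϑ_{m,a}` and
`θ_{m,-a} = θ_{m,a}`, it expands `ϑ(z + 1/2)⁴` into the stated decomposition.
-/

noncomputable def thetaMATerm (m a : ℝ) (z τ : ℂ) (n : ℤ) : ℂ :=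
  cexp (2 * (Real.pi : ℂ) * I * τ * ((2 * m * n + a) ^ 2 / (4 * m)) +
    2 * (Real.pi : ℂ) * I * z * (2 * m * n + a))

lemma thetaMA_eq_tsum (m a : ℝ) (z τ : ℂ) : thetaMA m a z τ = ∑' n, thetaMATerm m a z τ n := rfl

lemma thetaMATerm_eq_mul_jacobiTheta₂_term {m : ℝ} (hm : m ≠ 0) (a : ℝ) (z τ : ℂ) (n : ℤ) :
    thetaMATerm m a z τ n = cexp ((Real.pi : ℂ) * I * τ * a ^ 2 / (2 * m) + 2 * Real.pi * I * z * a) *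
      jacobiTheta₂_term n (a * τ + 2 * m * z) (2 * m * τ) := by
  have hm' : (m : ℂ) ≠ 0 := ofReal_ne_zero.2 hm
  rw [thetaMATerm, jacobiTheta₂_term, ← Complex.exp_add]
  congr 1
  field_simp
  ring

lemma summable_norm_thetaMATerm {m : ℝ} (hm : 0 < m) (a : ℝ) (z : ℂ) {τ : ℂ} (hτ : 0 < τ.im) :
    Summable fun n ↦ ‖thetaMATerm m a z τ n‖ := by
  have hmτ : 0 < (2 * (m : ℂ) * τ).im := by simpa using mul_pos (mul_pos two_pos hm) hτ
  simp_rw [thetaMATerm_eq_mul_jacobiTheta₂_term hm.ne', norm_mul]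
  exact (summable_norm_iff.2 ((summable_jacobiTheta₂_term_iff _ _).2 hmτ)).mul_left _

theorem thetaMA_add_two_mul (m a : ℝ) (z τ : ℂ) : thetaMA m (a + 2 * m) z τ = thetaMA m a z τ := by
  rw [thetaMA_eq_tsum, thetaMA_eq_tsum, ← (Equiv.subRight (1 : ℤ)).tsum_eq]
  refine tsum_congr fun n ↦ ?_
  simp only [thetaMATerm, Equiv.subRight_apply]
  congr 1
  push_cast
  ring

theorem thetaMA_neg (m a : ℝ) (z τ : ℂ) : thetaMA m (-a) (-z) τ = thetaMA m a z τ := by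
  rw [thetaMA_eq_tsum, thetaMA_eq_tsum, ← (Equiv.neg ℤ).tsum_eq]
  refine tsum_congr fun n ↦ ?_
  simp only [thetaMATerm, Equiv.neg_apply]
  congr 1
  push_cast
  ring

theorem thetaC_neg (m a : ℝ) (τ : ℂ) : thetaC m (-a) τ = thetaC m a τ := by
  simpa [thetaC] using thetaMA_neg m a 0 τ

theorem jTheta_add_half (z τ : ℂ) : jTheta (z + 1 / 2) τ = -thetaMA (1 / 2) (1 / 2) z τ := by
  rw [jTheta, thetaMA_eq_tsum, ← tsum_neg]
  refine tsum_congr fun n ↦ ?_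
  have harg : (Real.pi : ℂ) * I * ((n : ℂ) + 1 / 2) ^ 2 * τ +
      2 * (Real.pi : ℂ) * I * ((n : ℂ) + 1 / 2) * (z + 1 / 2 + 1 / 2) =
      2 * (Real.pi : ℂ) * I * τ * ((2 * (1 / 2 : ℝ) * n + (1 / 2 : ℝ)) ^ 2 / (4 * (1 / 2 : ℝ))) +
        2 * (Real.pi : ℂ) * I * z * (2 * (1 / 2 : ℝ) * n + (1 / 2 : ℝ)) +
        n * (2 * Real.pi * I) + Real.pi * I := by
    push_cast
    ring
  rw [thetaMATerm, harg, Complex.exp_add, Complex.exp_add, exp_int_mul_two_pi_mul_I, exp_pi_mul_I]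
  ring

/-- Splits `(j, k)` according to the parity `ε` of `j - k`, as `j = r + p + ε`, `k = r - p`. -/
def Int.prodEquivSumProdParity : (ℤ × ℤ) ⊕ (ℤ × ℤ) ≃ ℤ × ℤ where
  toFun := Sum.elim (fun x ↦ (x.2 + x.1, x.2 - x.1)) (fun x ↦ (x.2 + x.1 + 1, x.2 - x.1))
  invFun y := if (y.1 - y.2) % 2 = 0 then .inl ((y.1 - y.2) / 2, (y.1 + y.2) / 2)
    else .inr ((y.1 - y.2 - 1) / 2, (y.1 + y.2 - 1) / 2)
  left_inv := by
    rintro (⟨p, r⟩ | ⟨p, r⟩) <;> dsimp only [Sum.elim_inl, Sum.elim_inr]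
    · rw [if_pos (by omega)]
      simp only [Sum.inl.injEq, Prod.mk.injEq]
      omega
    · rw [if_neg (by omega)]
      simp only [Sum.inr.injEq, Prod.mk.injEq]
      omega
  right_inv := by
    rintro ⟨j, k⟩
    dsimp only
    split_ifs <;> simp only [Sum.elim_inl, Sum.elim_inr, Prod.mk.injEq] <;> omega

lemma thetaMATerm_mul_thetaMATerm {m : ℝ} (hm : m ≠ 0) (a b : ℝ) (z τ : ℂ) (ε p r : ℤ) :
    thetaMATerm m a z τ (r + p + ε) * thetaMATerm m b z τ (r - p) =
      thetaMATerm (2 * m) (a - b + 2 * m * ε) 0 τ p *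
        thetaMATerm (2 * m) (a + b + 2 * m * ε) z τ r := by
  have hm' : (m : ℂ) ≠ 0 := ofReal_ne_zero.2 hm
  simp only [thetaMATerm, ← Complex.exp_add]
  congr 1
  push_cast
  field_simp
  ring

theorem thetaMA_mul_thetaMA {m : ℝ} (hm : 0 < m) (a b : ℝ) (z : ℂ) {τ : ℂ} (hτ : 0 < τ.im) :
    thetaMA m a z τ * thetaMA m b z τ =
      thetaC (2 * m) (a - b) τ * thetaMA (2 * m) (a + b) z τ +
        thetaC (2 * m) (a - b + 2 * m) τ * thetaMA (2 * m) (a + b + 2 * m) z τ := by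
  have hm2 : 0 < 2 * m := by positivity
  have hS := summable_norm_thetaMATerm hm
  have hS2 := summable_norm_thetaMATerm hm2
  have hsum : Summable fun x ↦ thetaMATerm m a z τ (Int.prodEquivSumProdParity x).1 *
      thetaMATerm m b z τ (Int.prodEquivSumProdParity x).2 :=
    Int.prodEquivSumProdParity.summable_iff.2
      (summable_mul_of_summable_norm (hS a z hτ) (hS b z hτ))
  have hsplit (ε : ℤ) : ∑' x : ℤ × ℤ, thetaMATerm m a z τ (x.2 + x.1 + ε) *
      thetaMATerm m b z τ (x.2 - x.1) =
      thetaC (2 * m) (a - b + 2 * m * ε) τ * thetaMA (2 * m) (a + b + 2 * m * ε) z τ := by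
    rw [thetaC, thetaMA_eq_tsum, thetaMA_eq_tsum, tsum_mul_tsum_of_summable_norm
      (hS2 _ _ hτ) (hS2 _ _ hτ)]
    exact tsum_congr fun x ↦ thetaMATerm_mul_thetaMATerm hm.ne' a b z τ ε x.1 x.2
  rw [thetaMA_eq_tsum, thetaMA_eq_tsum, tsum_mul_tsum_of_summable_norm (hS a z hτ) (hS b z hτ),
    ← Int.prodEquivSumProdParity.tsum_eq,
    Summable.tsum_sum (hsum.comp_injective Sum.inl_injective)
      (hsum.comp_injective Sum.inr_injective)]
  simpa [Int.prodEquivSumProdParity] using congr($(hsplit 0) + $(hsplit 1))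

/-- The `h₂` theta decomposition of `ϑ(z+1/2;τ)⁴`. -/
theorem theta_fourth_decomposition (τ z : ℂ) (hτ : 0 < τ.im) :
    jTheta (z + 1/2) τ ^ 4 =
      (thetaC 1 1 τ ^ 2 * thetaC 2 0 τ + thetaC 1 0 τ ^ 2 * thetaC 2 2 τ) * thetaMA 2 0 z τ +
      (2 * thetaC 1 0 τ * thetaC 1 1 τ * thetaC 2 1 τ) * (thetaMA 2 1 z τ + thetaMA 2 3 z τ) +
      (thetaC 1 1 τ ^ 2 * thetaC 2 2 τ + thetaC 1 0 τ ^ 2 * thetaC 2 0 τ) * thetaMA 2 2 z τ := by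
  have h_half : thetaMA (1 / 2) (1 / 2) z τ * thetaMA (1 / 2) (1 / 2) z τ =
      thetaC 1 0 τ * thetaMA 1 1 z τ + thetaC 1 1 τ * thetaMA 1 0 z τ := by
    rw [thetaMA_mul_thetaMA (by norm_num) _ _ _ hτ, ← thetaMA_add_two_mul 1 0]
    norm_num
  have h00 : thetaMA 1 0 z τ * thetaMA 1 0 z τ =
      thetaC 2 0 τ * thetaMA 2 0 z τ + thetaC 2 2 τ * thetaMA 2 2 z τ := by
    rw [thetaMA_mul_thetaMA one_pos _ _ _ hτ]
    norm_num
  have h11 : thetaMA 1 1 z τ * thetaMA 1 1 z τ =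
      thetaC 2 2 τ * thetaMA 2 0 z τ + thetaC 2 0 τ * thetaMA 2 2 z τ := by
    rw [thetaMA_mul_thetaMA one_pos _ _ _ hτ, ← thetaMA_add_two_mul 2 0]
    norm_num
    ring
  have h01 : thetaMA 1 0 z τ * thetaMA 1 1 z τ =
      thetaC 2 1 τ * (thetaMA 2 1 z τ + thetaMA 2 3 z τ) := by
    rw [thetaMA_mul_thetaMA one_pos _ _ _ hτ]
    norm_num
    rw [thetaC_neg]
    ring
  rw [jTheta_add_half]
  linear_combination
    (thetaMA (1 / 2) (1 / 2) z τ * thetaMA (1 / 2) (1 / 2) z τ +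
      thetaC 1 0 τ * thetaMA 1 1 z τ + thetaC 1 1 τ * thetaMA 1 0 z τ) * h_half +
    thetaC 1 1 τ ^ 2 * h00 + thetaC 1 0 τ ^ 2 * h11 +
    2 * thetaC 1 0 τ * thetaC 1 1 τ * h01
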